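/- Let d ≥ 2 be an integer and α ∈ (0,2), and let Π = {y ∈ ℝ^d : y₁ ≤ 1} be a half-space. Then for every x = (r,0,…,0) with r < 1, ∫_{{y ∈ ℝ^d : x−y ∉ Π}} |y|^{−d−α} dy = σ_{d−1} α^{−1} (∫_0^∞ ρ^{d−2}(1+ρ²)^{−(d+α)/2} dρ) · (1−r)^{−α}; equivalently, the fractional Laplacian of the indicator function of Π evaluated at x equals C_{α,d}(1−r)^{−α} with C_{α,d} = 𝒜 σ_{d−1} α^{−1} ∫_0^∞ ρ^{d−2}(1+ρ²)^{−(d+α)/2} dρ. -/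

import Mathlib

open MeasureTheory Real

/-- The area `σ_d = 2π^{d/2}/Γ(d/2)` of the unit sphere in `ℝ^d`. -/
noncomputable def sigmaConst (d : ℕ) : ℝ := 2 * π ^ ((d : ℝ) / 2) / Gamma ((d : ℝ) / 2)

/-- The normalizing constant `𝒜(d,α)` of the fractional Laplacian. -/
noncomputable def fracLapConst (d : ℕ) (α : ℝ) : ℝ :=
  2 ^ α * Gamma (((d : ℝ) + α) / 2) / (π ^ ((d : ℝ) / 2) * |Gamma (-α / 2)|)

/-! Since `x - y ∉ Π` iff `y₁ < r - 1`, the integral runs over a half-space at distance `1 - r`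
from the origin. Slicing it by the hyperplanes `y₁ = t` and scaling `z = |t| w` in each slice
turns the slice integral into `|t| ^ (-1 - α) * ∫_{ℝ^{d-1}} (1 + |w|²) ^ (-(d + α) / 2) dw`,
and polar coordinates in `ℝ^{d-1}` turn the latter into
`σ_{d-1} ∫₀^∞ ρ ^ (d - 2) (1 + ρ²) ^ (-(d + α) / 2) dρ`. Finally
`∫_{t < r - 1} |t| ^ (-1 - α) dt = (1 - r) ^ (-α) / α`. -/

open Set Module

lemma sigmaConst_eq_mul_volume_real_ball {n : ℕ} (hn : n ≠ 0) :
    sigmaConst n = n * volume.real (Metric.ball (0 : EuclideanSpace ℝ (Fin n)) 1) := by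
  have : Nonempty (Fin n) := ⟨⟨0, Nat.pos_of_ne_zero hn⟩⟩
  have hn2 : (0 : ℝ) < n / 2 := by positivity
  have hsqrt : √π ^ n = π ^ ((n : ℝ) / 2) := by
    rw [sqrt_eq_rpow, ← rpow_natCast, ← rpow_mul pi_pos.le]
    ring_nf
  rw [measureReal_def, EuclideanSpace.volume_ball, Fintype.card_fin, ENNReal.ofReal_one, one_pow,
    one_mul, ENNReal.toReal_ofReal (by positivity), Gamma_add_one hn2.ne', hsqrt, sigmaConst]
  field_simp

lemma integral_fun_norm_euclideanSpace {n : ℕ} (hn : n ≠ 0) (f : ℝ → ℝ) :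
    ∫ x : EuclideanSpace ℝ (Fin n), f ‖x‖ =
      sigmaConst n * ∫ ρ in Ioi (0 : ℝ), ρ ^ ((n : ℝ) - 1) * f ρ := by
  have : Nontrivial (EuclideanSpace ℝ (Fin n)) := by
    have : Nonempty (Fin n) := ⟨⟨0, Nat.pos_of_ne_zero hn⟩⟩
    infer_instance
  rw [integral_fun_norm_addHaar, finrank_euclideanSpace_fin, nsmul_eq_mul, smul_eq_mul,
    sigmaConst_eq_mul_volume_real_ball hn, mul_assoc]
  congr 2
  refine setIntegral_congr_fun measurableSet_Ioi fun ρ _ => ?_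
  rw [smul_eq_mul, ← rpow_natCast, Nat.cast_sub (Nat.one_le_iff_ne_zero.mpr hn), Nat.cast_one]

lemma integral_rpow_sq_add_norm_sq {E : Type*} [NormedAddCommGroup E] [NormedSpace ℝ E]
    [FiniteDimensional ℝ E] [MeasurableSpace E] [BorelSpace E] (μ : Measure E)
    [μ.IsAddHaarMeasure] (p : ℝ) {t : ℝ} (ht : t ≠ 0) :
    ∫ z, (t ^ 2 + ‖z‖ ^ 2) ^ (-p / 2) ∂μ =
      |t| ^ ((finrank ℝ E : ℝ) - p) * ∫ z, (1 + ‖z‖ ^ 2) ^ (-p / 2) ∂μ := by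
  have ht' : 0 < |t| := abs_pos.mpr ht
  have hscale : ∀ z : E,
      (t ^ 2 + ‖|t| • z‖ ^ 2) ^ (-p / 2) = |t| ^ (-p) * (1 + ‖z‖ ^ 2) ^ (-p / 2) := by
    intro z
    rw [norm_smul, norm_abs_eq_norm, Real.norm_eq_abs, mul_pow, sq_abs,
      show t ^ 2 + t ^ 2 * ‖z‖ ^ 2 = t ^ 2 * (1 + ‖z‖ ^ 2) by ring,
      mul_rpow (by positivity) (by positivity), ← sq_abs, ← rpow_natCast, ← rpow_mul ht'.le]
    congr 2
    ring
  have hsmul := Measure.integral_comp_smul μ (fun z => (t ^ 2 + ‖z‖ ^ 2) ^ (-p / 2)) |t|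
  simp only [hscale, integral_const_mul, smul_eq_mul] at hsmul
  rw [abs_inv, abs_pow, abs_abs, ← rpow_natCast] at hsmul
  calc ∫ z, (t ^ 2 + ‖z‖ ^ 2) ^ (-p / 2) ∂μ
      = |t| ^ (finrank ℝ E : ℝ) * ((|t| ^ (finrank ℝ E : ℝ))⁻¹ *
          ∫ z, (t ^ 2 + ‖z‖ ^ 2) ^ (-p / 2) ∂μ) := by field_simp
    _ = _ := by rw [← hsmul, rpow_sub ht', rpow_neg ht'.le]; ring

lemma integral_Iio_neg_abs_rpow {s : ℝ} (hs : 0 < s) {α : ℝ} (hα : 0 < α) :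
    ∫ t in Iio (-s), |t| ^ (-1 - α) = s ^ (-α) / α := by
  rw [← integral_Iic_eq_integral_Iio, ← integral_comp_neg_Ioi,
    setIntegral_congr_fun measurableSet_Ioi fun u (hu : s < u) => by
      rw [abs_neg, abs_of_pos (hs.trans hu)],
    integral_Ioi_rpow_of_lt (by linarith) hs]
  rw [show -1 - α + 1 = -α by ring, neg_div_neg_eq]

lemma integrableOn_norm_rpow_of_le_norm {E : Type*} [NormedAddCommGroup E] [NormedSpace ℝ E]
    [FiniteDimensional ℝ E] [MeasurableSpace E] [BorelSpace E] (μ : Measure E)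
    [μ.IsAddHaarMeasure] {p : ℝ} (hp : (finrank ℝ E : ℝ) < p) {s : ℝ} (hs : 0 < s) :
    IntegrableOn (fun y => ‖y‖ ^ (-p)) {y | s ≤ ‖y‖} μ := by
  have hp0 : 0 ≤ p := (Nat.cast_nonneg _).trans hp.le
  refine (((integrable_one_add_norm hp).const_mul ((1 + s⁻¹) ^ p)).restrict).mono'
    (measurable_norm.pow_const _).aestronglyMeasurable ?_
  filter_upwards [ae_restrict_mem (isClosed_le continuous_const continuous_norm).measurableSet]
    with y (hy : s ≤ ‖y‖)
  have hy0 : 0 < ‖y‖ := hs.trans_le hy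
  have hle : 1 + ‖y‖ ≤ (1 + s⁻¹) * ‖y‖ := by
    have : 1 ≤ s⁻¹ * ‖y‖ := by rw [← inv_mul_cancel₀ hs.ne']; gcongr
    linarith
  calc ‖‖y‖ ^ (-p)‖ = ‖y‖ ^ (-p) := by rw [norm_of_nonneg (by positivity)]
    _ = (1 + s⁻¹) ^ p * ((1 + s⁻¹) * ‖y‖) ^ (-p) := by
      rw [mul_rpow (by positivity) hy0.le, ← mul_assoc, ← rpow_add (by positivity),
        add_neg_cancel, rpow_zero, one_mul]
    _ ≤ (1 + s⁻¹) ^ p * (1 + ‖y‖) ^ (-p) :=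
      mul_le_mul_of_nonneg_left (rpow_le_rpow_of_nonpos (by positivity) hle (by linarith))
        (by positivity)

lemma integrableOn_coord_lt_norm_rpow {ι : Type*} [Fintype ι] {p : ℝ}
    (hp : (Fintype.card ι : ℝ) < p) (i : ι) {s : ℝ} (hs : 0 < s) :
    IntegrableOn (fun y => ‖y‖ ^ (-p)) {y : EuclideanSpace ℝ ι | y i < -s} := by
  refine (integrableOn_norm_rpow_of_le_norm volume (by rwa [finrank_euclideanSpace]) hs).mono_set
    fun y (hy : y i < -s) => ?_
  calc s ≤ |y i| := by rw [abs_of_neg (by linarith)]; linarith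
    _ ≤ ‖y‖ := PiLp.norm_apply_le y i

def euclideanFinConsEquiv (n : ℕ) :
    ℝ × EuclideanSpace ℝ (Fin n) ≃ᵐ EuclideanSpace ℝ (Fin (n + 1)) :=
  ((MeasurableEquiv.refl ℝ).prodCongr (MeasurableEquiv.toLp 2 (Fin n → ℝ)).symm).trans
    ((MeasurableEquiv.piFinSuccAbove (fun _ => ℝ) 0).symm.trans (MeasurableEquiv.toLp 2 _))

lemma euclideanFinConsEquiv_apply {n : ℕ} (w : ℝ × EuclideanSpace ℝ (Fin n)) :
    euclideanFinConsEquiv n w = WithLp.toLp 2 (Fin.cons w.1 (WithLp.ofLp w.2)) := by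
  simp only [euclideanFinConsEquiv, MeasurableEquiv.trans_apply,
    MeasurableEquiv.piFinSuccAbove_symm_apply, Fin.insertNthEquiv_zero,
    MeasurableEquiv.toLp_apply, WithLp.toLp.injEq]
  rfl

lemma measurePreserving_euclideanFinConsEquiv (n : ℕ) :
    MeasurePreserving (euclideanFinConsEquiv n) :=
  ((MeasurePreserving.id volume).prod (PiLp.volume_preserving_ofLp (Fin n))).trans <|
    (volume_preserving_piFinSuccAbove (fun _ => ℝ) 0).symm.trans (PiLp.volume_preserving_toLp _)

lemma norm_euclideanFinConsEquiv_sq {n : ℕ} (w : ℝ × EuclideanSpace ℝ (Fin n)) :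
    ‖euclideanFinConsEquiv n w‖ ^ 2 = w.1 ^ 2 + ‖w.2‖ ^ 2 := by
  simp [EuclideanSpace.norm_sq_eq, euclideanFinConsEquiv_apply, Fin.sum_univ_succ]

lemma setIntegral_coord_lt_norm_rpow_eq_mul (n : ℕ) {α : ℝ} (hα : 0 < α) {s : ℝ} (hs : 0 < s) :
    ∫ y in {y : EuclideanSpace ℝ (Fin (n + 1)) | y 0 < -s}, ‖y‖ ^ (-((n + 1 : ℕ) : ℝ) - α) =
      (∫ z : EuclideanSpace ℝ (Fin n), (1 + ‖z‖ ^ 2) ^ (-(((n + 1 : ℕ) : ℝ) + α) / 2)) *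
        (s ^ (-α) / α) := by
  set p : ℝ := ((n + 1 : ℕ) : ℝ) + α
  rw [show -((n + 1 : ℕ) : ℝ) - α = -p by ring]
  set e := euclideanFinConsEquiv n
  have he : MeasurePreserving e := measurePreserving_euclideanFinConsEquiv n
  have hpre : e ⁻¹' {y | y 0 < -s} = Iio (-s) ×ˢ univ := by
    ext w
    simp [e, euclideanFinConsEquiv_apply]
  have hcomp : ∀ w, ‖e w‖ ^ (-p) = (w.1 ^ 2 + ‖w.2‖ ^ 2) ^ (-p / 2) := by
    intro w
    rw [← norm_euclideanFinConsEquiv_sq, ← rpow_natCast, ← rpow_mul (norm_nonneg _)]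
    congr 1
    ring
  have hint : IntegrableOn (fun w : ℝ × EuclideanSpace ℝ (Fin n) =>
      (w.1 ^ 2 + ‖w.2‖ ^ 2) ^ (-p / 2)) (Iio (-s) ×ˢ univ) := by
    have := integrableOn_coord_lt_norm_rpow (p := p) (by simp [p, hα]) (0 : Fin (n + 1)) hs
    rw [← he.integrableOn_comp_preimage e.measurableEmbedding, hpre] at this
    exact this.congr_fun (fun w _ => hcomp w) (measurableSet_Iio.prod .univ)
  have hslice : ∀ t ∈ Iio (-s),
      ∫ z : EuclideanSpace ℝ (Fin n) in univ, (t ^ 2 + ‖z‖ ^ 2) ^ (-p / 2) =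
      (∫ z : EuclideanSpace ℝ (Fin n), (1 + ‖z‖ ^ 2) ^ (-p / 2)) * |t| ^ (-1 - α) := by
    intro t (ht : t < -s)
    rw [Measure.restrict_univ, integral_rpow_sq_add_norm_sq volume p (by linarith),
      finrank_euclideanSpace_fin, mul_comm]
    congr 2
    simp only [p]
    push_cast
    ring
  rw [← he.setIntegral_preimage_emb e.measurableEmbedding, hpre]
  simp only [hcomp]
  rw [Measure.volume_eq_prod, setIntegral_prod _ hint,
    setIntegral_congr_fun measurableSet_Iio hslice, integral_const_mul,
    integral_Iio_neg_abs_rpow hs hα]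

lemma setIntegral_coord_lt_norm_rpow {n : ℕ} (hn : n ≠ 0) {α : ℝ} (hα : 0 < α) {s : ℝ}
    (hs : 0 < s) :
    ∫ y in {y : EuclideanSpace ℝ (Fin (n + 1)) | y 0 < -s}, ‖y‖ ^ (-((n + 1 : ℕ) : ℝ) - α) =
      sigmaConst n * α⁻¹ *
        (∫ ρ in Ioi (0 : ℝ), ρ ^ ((n : ℝ) - 1) * (1 + ρ ^ 2) ^ (-(((n + 1 : ℕ) : ℝ) + α) / 2)) *
        s ^ (-α) := by
  rw [setIntegral_coord_lt_norm_rpow_eq_mul n hα hs,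
    integral_fun_norm_euclideanSpace hn fun ρ => (1 + ρ ^ 2) ^ (-(((n + 1 : ℕ) : ℝ) + α) / 2)]
  ring

/-- Fractional Laplacian of the indicator of the half-space `Π = {y : y₁ ≤ 1}`,
evaluated at `x = r e₁` with `r < 1`. -/
theorem fracLap_halfspace (d : ℕ) (hd : 2 ≤ d) (α : ℝ) (hα : α ∈ Set.Ioo (0:ℝ) 2)
    (r : ℝ) (hr : r < 1)
    (x : EuclideanSpace ℝ (Fin d))
    (hx : x = r • EuclideanSpace.single (⟨0, by omega⟩ : Fin d) (1:ℝ)) :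
    (∫ y in {y : EuclideanSpace ℝ (Fin d) | ¬ ((x - y) (⟨0, by omega⟩ : Fin d) ≤ 1)},
        ‖y‖ ^ (-(d : ℝ) - α))
      = sigmaConst (d - 1) * α⁻¹ *
          (∫ ρ in Set.Ioi (0:ℝ), ρ ^ ((d : ℝ) - 2) * (1 + ρ ^ 2) ^ (-((d : ℝ) + α) / 2)) *
          (1 - r) ^ (-α) ∧
    fracLapConst d α *
        (∫ y in {y : EuclideanSpace ℝ (Fin d) | ¬ ((x - y) (⟨0, by omega⟩ : Fin d) ≤ 1)},
            ‖y‖ ^ (-(d : ℝ) - α))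
      = (fracLapConst d α * sigmaConst (d - 1) * α⁻¹ *
          (∫ ρ in Set.Ioi (0:ℝ), ρ ^ ((d : ℝ) - 2) * (1 + ρ ^ 2) ^ (-((d : ℝ) + α) / 2))) *
          (1 - r) ^ (-α) := by
  obtain ⟨n, rfl⟩ : ∃ n, d = n + 1 := ⟨d - 1, by omega⟩
  have hset : {y : EuclideanSpace ℝ (Fin (n + 1)) | ¬ ((x - y) ⟨0, by omega⟩ ≤ 1)} =
      {y | y 0 < -(1 - r)} := by
    ext y
    simp only [hx, mem_ofPred_eq, not_le, Fin.zero_eta, PiLp.sub_apply, PiLp.smul_apply,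
      smul_eq_mul, PiLp.single_apply, if_true, mul_one]
    constructor <;> intro h <;> linarith
  rw [hset, setIntegral_coord_lt_norm_rpow (by omega) hα.1 (by linarith), Nat.add_sub_cancel,
    show ((n + 1 : ℕ) : ℝ) - 2 = n - 1 by push_cast; ring]
  exact ⟨rfl, by ring⟩
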